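/- If the spectral abscissa satisfies μ(B F* − D − L*) ≤ 0, then for each node i ∈ {1,…,n} there exists a layer α ∈ {1,…,m} such that δ^α_i > β^α_i − ν^α_i. -/

import Mathlib

/-!
Write `M = B F* − D − L*`. It is a Metzler matrix, and inside each layer its off-diagonal
pattern is that of `(Q^α)ᵀ`, so each layer is strongly connected in the graph of `M`. If the
conclusion failed at node `i`, the indicator `v` of node `i` (in every layer) would satisfy
`M v ≥ 0`, because `F* v = v`, with `M v > 0` at the out-neighbours of `i`. Multiplying `v` by a
high power of the nonnegative matrix `c • 1 + M` gives `w > 0` with `M w > 0`, hence `r • w ≤ M w`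
for some `r > 0`. By Gelfand's formula `c • 1 + M` then has spectral radius at least `r + c`,
which for large `c` is only possible if `M` has an eigenvalue with real part at least `r`,
contradicting `μ(M) ≤ 0`.
-/

open Matrix BigOperators Finset

/-- Spectral abscissa of a real square matrix: the maximum of the real parts of its
(complex) eigenvalues. -/
noncomputable def specAbscissa {k : Type*} [Fintype k] [DecidableEq k]
    (M : Matrix k k ℝ) : ℝ :=
  sSup {r : ℝ | ∃ z ∈ spectrum ℂ (M.map Complex.ofReal), z.re = r}

/-- Diagonal `nm × nm` matrix (indexed by pairs `(α, i)`) built from rates `c^α_i`. -/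
noncomputable def pairDiag {n m : ℕ} (c : Fin m → Fin n → ℝ) :
    Matrix (Fin m × Fin n) (Fin m × Fin n) ℝ :=
  Matrix.diagonal fun q => c q.1 q.2

/-- The equilibrium dispersal Laplacian `L*`: block-diagonal, whose `α`-th `n × n` block
has `(i,i)` entry `ν^α_i = ∑_{j ≠ i} q^α_{ij}` and `(i,j)` entry `-q^α_{ji} π^α_j / π^α_i`
for `j ≠ i`. -/
noncomputable def Lstar {n m : ℕ} (Q : Fin m → Matrix (Fin n) (Fin n) ℝ)
    (piv : Fin m → Fin n → ℝ) : Matrix (Fin m × Fin n) (Fin m × Fin n) ℝ :=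
  Matrix.of fun q q' =>
    if q.1 = q'.1 then
      (if q.2 = q'.2 then ∑ j ∈ Finset.univ \ {q.2}, Q q.1 q.2 j
       else -(Q q.1 q'.2 q.2 * piv q.1 q'.2 / piv q.1 q.2))
    else 0

/-- The equilibrium population-fraction matrix `F*`: the `(α,σ)` block is the diagonal
matrix with entries `f^{*σ}_i = N^σ π^σ_i / ∑_τ N^τ π^τ_i` (the same row of blocks
repeated for every `α`). -/
noncomputable def Fstar {n m : ℕ} (N : Fin m → ℝ) (piv : Fin m → Fin n → ℝ) :
    Matrix (Fin m × Fin n) (Fin m × Fin n) ℝ :=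
  Matrix.of fun q q' =>
    if q.2 = q'.2 then N q'.1 * piv q'.1 q.2 / ∑ τ, N τ * piv τ q.2 else 0

open Filter Topology

lemma Complex.eventually_norm_add_ofReal_lt {z : ℂ} {r : ℝ} (h : z.re < r) :
    ∀ᶠ c : ℝ in atTop, ‖z + c‖ < r + c := by
  have hd : 0 < r - z.re := sub_pos.2 h
  filter_upwards [eventually_gt_atTop (-r),
    eventually_gt_atTop ((z.im ^ 2 / (r - z.re) - r - z.re) / 2)] with c hc hc'
  have him : z.im ^ 2 < (r - z.re) * (r + z.re + 2 * c) := by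
    rw [← div_lt_iff₀' hd]
    linarith
  refine lt_of_pow_lt_pow_left₀ 2 (by linarith) ?_
  rw [Complex.sq_norm, Complex.normSq_apply]
  simp only [Complex.add_re, Complex.ofReal_re, Complex.add_im, Complex.ofReal_im, add_zero]
  nlinarith

lemma exists_pos_smul_le_of_forall_pos {ι : Type*} [Finite ι] (w : ι → ℝ) {u : ι → ℝ}
    (hu : ∀ i, 0 < u i) : ∃ r : ℝ, 0 < r ∧ r • w ≤ u := by
  have h : ∀ i, ∀ᶠ r in 𝓝 (0 : ℝ), r * w i < u i := fun i =>
    (continuous_id.mul continuous_const).continuousAt.eventually_lt continuousAt_const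
      (by simpa using hu i)
  obtain ⟨r, hr, hr0⟩ :=
    (((eventually_all.2 h).filter_mono nhdsWithin_le_nhds).and
      (self_mem_nhdsWithin (s := Set.Ioi (0 : ℝ)))).exists
  exact ⟨r, hr0, fun i => (hr i).le⟩

namespace Matrix

variable {k : Type*} [Fintype k]

def IsMetzler (M : Matrix k k ℝ) : Prop :=
  ∀ p q, p ≠ q → 0 ≤ M p q

lemma mulVec_mono {A : Matrix k k ℝ} (hA : ∀ p q, 0 ≤ A p q) {v w : k → ℝ} (h : v ≤ w) :
    A *ᵥ v ≤ A *ᵥ w := fun p =>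
  Finset.sum_le_sum fun q _ => mul_le_mul_of_nonneg_left (h q) (hA p q)

lemma mulVec_apply_pos {A : Matrix k k ℝ} (hA : ∀ p q, 0 ≤ A p q) {v : k → ℝ} (hv : 0 ≤ v)
    {p q : k} (hApq : 0 < A p q) (hvq : 0 < v q) : 0 < (A *ᵥ v) p :=
  (Finset.sum_pos_iff_of_nonneg fun r _ => mul_nonneg (hA p r) (hv r)).2
    ⟨q, Finset.mem_univ q, mul_pos hApq hvq⟩

lemma exists_pos_of_mulVec_apply_pos {A : Matrix k k ℝ} {v : k → ℝ} (hv : 0 ≤ v) {p : k}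
    (h : 0 < (A *ᵥ v) p) : ∃ q, 0 < A p q ∧ 0 < v q := by
  obtain ⟨q, -, hq⟩ := Finset.exists_lt_of_sum_lt (f := fun _ => 0)
    (g := fun q => A p q * v q) (by rw [sum_const_zero]; exact h)
  exact ⟨q, (pos_and_pos_or_neg_and_neg_of_mul_pos hq).resolve_right fun h => (hv q).not_gt h.2⟩

lemma exists_pow_apply_pos_of_reflTransGen [DecidableEq k] {A : Matrix k k ℝ}
    (hA : ∀ p q, 0 ≤ A p q) {p q : k} (h : Relation.ReflTransGen (fun a b => 0 < A a b) p q) :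
    ∃ s, 0 < (A ^ s) p q := by
  induction h using Relation.ReflTransGen.head_induction_on with
  | refl => exact ⟨0, by simp⟩
  | head hab _ ih =>
    obtain ⟨s, hs⟩ := ih
    refine ⟨s + 1, ?_⟩
    rw [pow_succ']
    exact mulVec_apply_pos hA (fun r => pow_apply_nonneg hA s r q) hab hs

lemma pow_apply_pos_of_le [DecidableEq k] {A : Matrix k k ℝ} (hA : ∀ p q, 0 ≤ A p q)
    (hdiag : ∀ p, 0 < A p p) {p q : k} {s t : ℕ} (hs : 0 < (A ^ s) p q) (hst : s ≤ t) :
    0 < (A ^ t) p q := by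
  induction t, hst using Nat.le_induction with
  | base => exact hs
  | succ t _ ih =>
    rw [pow_succ, mul_apply]
    exact (Finset.sum_pos_iff_of_nonneg fun r _ => mul_nonneg (pow_apply_nonneg hA t p r)
      (hA r q)).2 ⟨q, Finset.mem_univ q, mul_pos ih (hdiag q)⟩

lemma eventually_pow_apply_pos [DecidableEq k] {A : Matrix k k ℝ} (hA : ∀ p q, 0 ≤ A p q)
    (hdiag : ∀ p, 0 < A p p) {p q : k} (h : Relation.ReflTransGen (fun a b => 0 < A a b) p q) :
    ∀ᶠ s in atTop, 0 < (A ^ s) p q := by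
  obtain ⟨s, hs⟩ := exists_pow_apply_pos_of_reflTransGen hA h
  exact eventually_atTop.2 ⟨s, fun t hst => pow_apply_pos_of_le hA hdiag hs hst⟩

lemma eventually_pos_smul_one_add_apply_self [DecidableEq k] (M : Matrix k k ℝ) :
    ∀ᶠ c : ℝ in atTop, ∀ p, 0 < (c • (1 : Matrix k k ℝ) + M) p p :=
  eventually_all.2 fun p => (eventually_gt_atTop (-M p p)).mono fun c hc => by
    simp only [add_apply, smul_apply, one_apply_eq, smul_eq_mul, mul_one]
    linarith

lemma IsMetzler.eventually_nonneg_smul_one_add [DecidableEq k] {M : Matrix k k ℝ}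
    (hM : M.IsMetzler) :
    ∀ᶠ c : ℝ in atTop, ∀ p q, 0 ≤ (c • (1 : Matrix k k ℝ) + M) p q :=
  (eventually_pos_smul_one_add_apply_self M).mono fun c hc p q => by
    rcases eq_or_ne p q with rfl | hpq
    · exact (hc p).le
    · simpa [one_apply_ne hpq] using hM p q hpq

lemma IsMetzler.exists_pos_mulVec_pos [DecidableEq k] {M : Matrix k k ℝ} (hM : M.IsMetzler)
    {v : k → ℝ} (hv : 0 ≤ v) (hMv : 0 ≤ M *ᵥ v)
    (hreach : ∀ p, ∃ q, Relation.ReflTransGen (fun a b => 0 < M a b) p q ∧ 0 < (M *ᵥ v) q) :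
    ∃ w : k → ℝ, (∀ p, 0 < w p) ∧ ∀ p, 0 < (M *ᵥ w) p := by
  obtain ⟨c, hA, hdiag⟩ :=
    (hM.eventually_nonneg_smul_one_add.and (eventually_pos_smul_one_add_apply_self M)).exists
  set A := c • (1 : Matrix k k ℝ) + M
  have hedge : ∀ a b, 0 < M a b → 0 < A a b := fun a b hab => by
    rcases eq_or_ne a b with rfl | hne
    · exact hdiag a
    · simpa [A, one_apply_ne hne] using hab
  have hpos : ∀ p, ∀ᶠ s in atTop, 0 < (A ^ s *ᵥ v) p ∧ 0 < (A ^ s *ᵥ (M *ᵥ v)) p := fun p => by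
    obtain ⟨q, hpq, hq⟩ := hreach p
    obtain ⟨r, hqr, hr⟩ := exists_pos_of_mulVec_apply_pos hv hq
    filter_upwards
      [eventually_pow_apply_pos hA hdiag (Relation.ReflTransGen.mono hedge _ _ (hpq.tail hqr)),
        eventually_pow_apply_pos hA hdiag (Relation.ReflTransGen.mono hedge _ _ hpq)]
      with s hsr hsq
    exact ⟨mulVec_apply_pos (pow_apply_nonneg hA s) hv hsr hr,
      mulVec_apply_pos (pow_apply_nonneg hA s) hMv hsq hq⟩
  obtain ⟨s, hs⟩ := (eventually_all.2 hpos).exists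
  have hcomm : Commute M A := ((Commute.one_right M).smul_right c).add_right (Commute.refl M)
  refine ⟨A ^ s *ᵥ v, fun p => (hs p).1, fun p => ?_⟩
  rw [mulVec_mulVec, (hcomm.pow_right s).eq, ← mulVec_mulVec]
  exact (hs p).2

section SpectralRadius

attribute [local instance] Matrix.linftyOpNormedAddCommGroup Matrix.linftyOpNormedRing
  Matrix.linftyOpNormedAlgebra

lemma linfty_opNorm_map_ofReal (A : Matrix k k ℝ) : ‖A.map Complex.ofReal‖ = ‖A‖ := by
  simp [linfty_opNorm_def]

lemma pow_le_norm_pow_of_smul_le_mulVec [DecidableEq k] {A : Matrix k k ℝ} (hA : ∀ p q, 0 ≤ A p q)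
    {v : k → ℝ} (hv : 0 ≤ v) (hv0 : v ≠ 0) {r : ℝ} (hr : 0 ≤ r) (h : r • v ≤ A *ᵥ v) (t : ℕ) :
    r ^ t ≤ ‖A ^ t‖ := by
  have hpow : r ^ t • v ≤ A ^ t *ᵥ v := by
    induction t with
    | zero => simp
    | succ t ih =>
      calc r ^ (t + 1) • v = r ^ t • (r • v) := by rw [pow_succ, mul_smul]
        _ ≤ r ^ t • (A *ᵥ v) := smul_le_smul_of_nonneg_left h (pow_nonneg hr t)
        _ = A *ᵥ (r ^ t • v) := (mulVec_smul A _ v).symm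
        _ ≤ A *ᵥ (A ^ t *ᵥ v) := mulVec_mono hA ih
        _ = A ^ (t + 1) *ᵥ v := by rw [mulVec_mulVec, pow_succ']
  have hnorm : ‖r ^ t • v‖ ≤ ‖A ^ t *ᵥ v‖ := by
    refine (pi_norm_le_iff_of_nonneg (norm_nonneg _)).2 fun p => ?_
    have hp : 0 ≤ (r ^ t • v) p := smul_nonneg (pow_nonneg hr t) (hv p)
    rw [Real.norm_of_nonneg hp]
    exact (hpow p).trans ((le_abs_self _).trans (norm_le_pi_norm (A ^ t *ᵥ v) p))
  have hv_pos : 0 < ‖v‖ := norm_pos_iff.2 hv0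
  refine le_of_mul_le_mul_right ?_ hv_pos
  calc r ^ t * ‖v‖ = ‖r ^ t • v‖ := by rw [norm_smul, Real.norm_of_nonneg (pow_nonneg hr t)]
    _ ≤ ‖A ^ t *ᵥ v‖ := hnorm
    _ ≤ ‖A ^ t‖ * ‖v‖ := linfty_opNorm_mulVec _ _

lemma ofReal_le_spectralRadius_of_smul_le_mulVec [DecidableEq k] {A : Matrix k k ℝ}
    (hA : ∀ p q, 0 ≤ A p q) {v : k → ℝ} (hv : 0 ≤ v) (hv0 : v ≠ 0) {r : ℝ} (hr : 0 ≤ r)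
    (h : r • v ≤ A *ᵥ v) : ENNReal.ofReal r ≤ spectralRadius ℂ (A.map Complex.ofReal) := by
  refine ge_of_tendsto (spectrum.pow_norm_pow_one_div_tendsto_nhds_spectralRadius _) ?_
  filter_upwards [eventually_ne_atTop 0] with t ht
  refine ENNReal.ofReal_le_ofReal ?_
  have hmap : A.map Complex.ofReal ^ t = (A ^ t).map Complex.ofReal :=
    (Matrix.map_pow A Complex.ofRealHom t).symm
  rw [hmap, linfty_opNorm_map_ofReal]
  calc r = (r ^ t) ^ (1 / (t : ℝ)) := by rw [one_div, Real.pow_rpow_inv_natCast hr ht]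
    _ ≤ ‖A ^ t‖ ^ (1 / (t : ℝ)) := Real.rpow_le_rpow (pow_nonneg hr t)
        (pow_le_norm_pow_of_smul_le_mulVec hA hv hv0 hr h t) (by positivity)

lemma IsMetzler.exists_le_re_mem_spectrum [DecidableEq k] {M : Matrix k k ℝ} (hM : M.IsMetzler)
    {v : k → ℝ} (hv : 0 ≤ v) (hv0 : v ≠ 0) {r : ℝ} (h : r • v ≤ M *ᵥ v) :
    ∃ z ∈ spectrum ℂ (M.map Complex.ofReal), r ≤ z.re := by
  by_contra! hlt
  have : Nonempty k := let ⟨p, _⟩ := Function.ne_iff.1 hv0; ⟨p⟩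
  -- for large `c`, every eigenvalue `z + c` of `c • 1 + M` has modulus less than `r + c`
  have hshift : ∀ᶠ c : ℝ in atTop, ∀ z ∈ spectrum ℂ (M.map Complex.ofReal), ‖z + c‖ < r + c :=
    (finite_spectrum _).eventually_all.2 fun z hz =>
      Complex.eventually_norm_add_ofReal_lt (hlt z hz)
  obtain ⟨c, hc, hA, hrc⟩ :=
    (hshift.and (hM.eventually_nonneg_smul_one_add.and (eventually_ge_atTop (-r)))).exists
  set A := c • (1 : Matrix k k ℝ) + M
  have hAv : (r + c) • v ≤ A *ᵥ v := fun p => by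
    have := h p
    simp only [A, add_mulVec, smul_mulVec, one_mulVec, Pi.add_apply, Pi.smul_apply,
      smul_eq_mul] at this ⊢
    linarith
  have hAmap : A.map Complex.ofReal = algebraMap ℂ _ (c : ℂ) + M.map Complex.ofReal := by
    ext p q
    rcases eq_or_ne p q with rfl | hpq <;> simp [A, algebraMap_eq_diagonal, one_apply_ne, *]
  refine (ofReal_le_spectralRadius_of_smul_le_mulVec hA hv hv0 (by linarith) hAv).not_gt
    (spectrum.spectralRadius_lt_of_forall_lt _ fun w hw => ?_)
  rw [hAmap, ← sub_add_cancel w (c : ℂ), spectrum.add_mem_add_iff] at hw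
  have hw' := hc _ hw
  rw [sub_add_cancel] at hw'
  rw [← NNReal.coe_lt_coe, coe_nnnorm, Real.coe_toNNReal _ (by linarith)]
  exact hw'

end SpectralRadius

lemma IsMetzler.exists_pos_re_mem_spectrum [DecidableEq k] [Nonempty k] {M : Matrix k k ℝ}
    (hM : M.IsMetzler) {v : k → ℝ} (hv : 0 ≤ v) (hMv : 0 ≤ M *ᵥ v)
    (hreach : ∀ p, ∃ q, Relation.ReflTransGen (fun a b => 0 < M a b) p q ∧ 0 < (M *ᵥ v) q) :
    ∃ z ∈ spectrum ℂ (M.map Complex.ofReal), 0 < z.re := by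
  obtain ⟨w, hw, hMw⟩ := hM.exists_pos_mulVec_pos hv hMv hreach
  obtain ⟨r, hr, hrw⟩ := exists_pos_smul_le_of_forall_pos w hMw
  have hw0 : w ≠ 0 := Function.ne_iff.2 ⟨Classical.arbitrary k, (hw _).ne'⟩
  obtain ⟨z, hz, hrz⟩ := hM.exists_le_re_mem_spectrum (fun p => (hw p).le) hw0 hrw
  exact ⟨z, hz, hr.trans_le hrz⟩

end Matrix

lemma re_le_specAbscissa {k : Type*} [Fintype k] [DecidableEq k] {M : Matrix k k ℝ} {z : ℂ}
    (hz : z ∈ spectrum ℂ (M.map Complex.ofReal)) : z.re ≤ specAbscissa M :=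
  le_csSup ((Matrix.finite_spectrum _).image Complex.re).bddAbove ⟨z, hz, rfl⟩

lemma Relation.ReflTransGen.exists_ne_of_ne {α : Type*} {r : α → α → Prop} {a b : α}
    (h : Relation.ReflTransGen r a b) (hab : a ≠ b) : ∃ c, r a c ∧ c ≠ a := by
  induction h using Relation.ReflTransGen.head_induction_on with
  | refl => exact absurd rfl hab
  | @head a c hac _ ih =>
    by_cases hca : c = a
    · subst hca
      exact ih hab
    · exact ⟨c, hac, hca⟩

section Model

variable {n m : ℕ} (Q : Fin m → Matrix (Fin n) (Fin n) ℝ) (piv : Fin m → Fin n → ℝ)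
  (N : Fin m → ℝ) (β δ : Fin m → Fin n → ℝ)

noncomputable def epidemicMatrix : Matrix (Fin m × Fin n) (Fin m × Fin n) ℝ :=
  pairDiag β * Fstar N piv - pairDiag δ - Lstar Q piv

def nodeIndicator (i : Fin n) : Fin m × Fin n → ℝ :=
  fun q => if q.2 = i then 1 else 0

variable {Q piv N β δ}

lemma nodeIndicator_nonneg (i : Fin n) : 0 ≤ nodeIndicator (m := m) i := fun q => by
  unfold nodeIndicator
  split_ifs <;> norm_num

lemma Fstar_nonneg (hN : ∀ α, 0 ≤ N α) (hpiv : ∀ α i, 0 ≤ piv α i) (p q : Fin m × Fin n) :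
    0 ≤ Fstar N piv p q := by
  have hS : 0 ≤ ∑ τ, N τ * piv τ p.2 := sum_nonneg fun τ _ => mul_nonneg (hN τ) (hpiv τ p.2)
  simp only [Fstar, of_apply]
  split_ifs
  · exact div_nonneg (mul_nonneg (hN q.1) (hpiv q.1 p.2)) hS
  · exact le_rfl

lemma Lstar_apply_of_ne {σ : Fin m} {a b : Fin n} (hab : a ≠ b) :
    Lstar Q piv (σ, a) (σ, b) = -(Q σ b a * piv σ b / piv σ a) := by
  simp [Lstar, hab]

lemma Lstar_apply_nonpos_of_ne (hQoff : ∀ α i j, i ≠ j → 0 ≤ Q α i j)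
    (hpiv : ∀ α i, 0 ≤ piv α i) {p q : Fin m × Fin n} (hpq : p ≠ q) : Lstar Q piv p q ≤ 0 := by
  obtain ⟨σ, a⟩ := p
  obtain ⟨τ, b⟩ := q
  rcases eq_or_ne σ τ with rfl | hστ
  · have hab : a ≠ b := fun h => hpq (h ▸ rfl)
    rw [Lstar_apply_of_ne hab, neg_nonpos]
    exact div_nonneg (mul_nonneg (hQoff σ b a hab.symm) (hpiv σ b)) (hpiv σ a)
  · simp [Lstar, hστ]

lemma epidemicMatrix_apply_of_ne {p q : Fin m × Fin n} (hpq : p ≠ q) :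
    epidemicMatrix Q piv N β δ p q = β p.1 p.2 * Fstar N piv p q - Lstar Q piv p q := by
  simp [epidemicMatrix, pairDiag, diagonal_apply_ne _ hpq]

lemma isMetzler_epidemicMatrix (hQoff : ∀ α i j, i ≠ j → 0 ≤ Q α i j)
    (hpiv : ∀ α i, 0 ≤ piv α i) (hN : ∀ α, 0 ≤ N α) (hβ : ∀ α i, 0 ≤ β α i) :
    (epidemicMatrix Q piv N β δ).IsMetzler := fun p q hpq => by
  rw [epidemicMatrix_apply_of_ne hpq, sub_nonneg]
  exact (Lstar_apply_nonpos_of_ne hQoff hpiv hpq).trans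
    (mul_nonneg (hβ p.1 p.2) (Fstar_nonneg hN hpiv p q))

lemma epidemicMatrix_apply_pos (hpiv : ∀ α i, 0 < piv α i) (hN : ∀ α, 0 ≤ N α)
    (hβ : ∀ α i, 0 ≤ β α i) {σ : Fin m} {a b : Fin n} (hab : a ≠ b) (hQ : 0 < Q σ b a) :
    0 < epidemicMatrix Q piv N β δ (σ, a) (σ, b) := by
  have hne : ((σ, a) : Fin m × Fin n) ≠ (σ, b) := fun h => hab (Prod.ext_iff.1 h).2
  rw [epidemicMatrix_apply_of_ne hne, Lstar_apply_of_ne hab, sub_neg_eq_add]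
  exact add_pos_of_nonneg_of_pos
    (mul_nonneg (hβ σ a) (Fstar_nonneg hN (fun α i => (hpiv α i).le) _ _))
    (div_pos (mul_pos hQ (hpiv σ b)) (hpiv σ a))

lemma reflTransGen_epidemicMatrix (hpiv : ∀ α i, 0 < piv α i) (hN : ∀ α, 0 ≤ N α)
    (hβ : ∀ α i, 0 ≤ β α i) {σ : Fin m}
    (hQirr : ∀ i j, Relation.ReflTransGen (fun a b => 0 < Q σ a b) i j) (a b : Fin n) :
    Relation.ReflTransGen (fun p q => 0 < epidemicMatrix Q piv N β δ p q) (σ, a) (σ, b) := by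
  refine Relation.ReflTransGen.lift' (fun x => (σ, x)) (fun x y (hyx : 0 < Q σ y x) => ?_) a b
    (Relation.ReflTransGen.swap _ _ (hQirr b a))
  rcases eq_or_ne x y with rfl | hxy
  · exact Relation.ReflTransGen.refl
  · exact Relation.ReflTransGen.single (epidemicMatrix_apply_pos hpiv hN hβ hxy hyx)

lemma Fstar_mulVec_nodeIndicator {i : Fin n} (hS : ∑ τ, N τ * piv τ i ≠ 0) :
    Fstar N piv *ᵥ nodeIndicator i = nodeIndicator (m := m) i := by
  ext ⟨σ, j⟩
  simp only [mulVec, dotProduct, Fintype.sum_prod_type, Fstar, of_apply, nodeIndicator]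
  rcases eq_or_ne j i with rfl | hji
  · simp [← Finset.sum_div, hS]
  · simp [hji]

lemma epidemicMatrix_mulVec_nodeIndicator {i : Fin n} (hS : ∑ τ, N τ * piv τ i ≠ 0)
    (σ : Fin m) (j : Fin n) :
    (epidemicMatrix Q piv N β δ *ᵥ nodeIndicator i) (σ, j) =
      if j = i then β σ i - δ σ i - ∑ l ∈ univ \ {i}, Q σ i l
      else Q σ i j * piv σ i / piv σ j := by
  rw [epidemicMatrix, sub_mulVec, sub_mulVec, ← mulVec_mulVec, Fstar_mulVec_nodeIndicator hS]
  simp only [Pi.sub_apply, pairDiag, mulVec_diagonal]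
  simp only [mulVec, dotProduct, Fintype.sum_prod_type, Lstar, of_apply, nodeIndicator]
  rcases eq_or_ne j i with rfl | hji
  · simp
  · simp [hji]

end Model

theorem specAbscissa_nonpos_necessary_condition_per_node_general
    {n m : ℕ} (hn : 2 ≤ n) (hm : 1 ≤ m)
    (Q : Fin m → Matrix (Fin n) (Fin n) ℝ)
    (hQoff : ∀ (α : Fin m) (i j : Fin n), i ≠ j → 0 ≤ Q α i j)
    (hQirr : ∀ (α : Fin m) (i j : Fin n),
      Relation.ReflTransGen (fun a b => 0 < Q α a b) i j)
    (piv : Fin m → Fin n → ℝ) (hpivpos : ∀ α i, 0 < piv α i)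
    (N : Fin m → ℝ) (hN : ∀ α, 0 < N α)
    (β δ : Fin m → Fin n → ℝ)
    (hβ : ∀ α i, 0 < β α i)
    (hμ : specAbscissa (pairDiag β * Fstar N piv - pairDiag δ - Lstar Q piv) ≤ 0) :
    ∀ i : Fin n, ∃ α : Fin m,
      β α i - (∑ j ∈ Finset.univ \ {i}, Q α i j) < δ α i := by
  intro i
  by_contra! hle
  have : Nonempty (Fin m) := ⟨⟨0, hm⟩⟩
  have : Nontrivial (Fin n) := Fin.nontrivial_iff_two_le.2 hn
  have hpiv₀ : ∀ α i, 0 ≤ piv α i := fun α i => (hpivpos α i).le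
  have hN₀ : ∀ α, 0 ≤ N α := fun α => (hN α).le
  have hβ₀ : ∀ α i, 0 ≤ β α i := fun α i => (hβ α i).le
  have hS : ∑ τ, N τ * piv τ i ≠ 0 :=
    (sum_pos (fun τ _ => mul_pos (hN τ) (hpivpos τ i)) univ_nonempty).ne'
  have hMv := epidemicMatrix_mulVec_nodeIndicator (Q := Q) (β := β) (δ := δ) hS
  have hMv_nonneg : 0 ≤ epidemicMatrix Q piv N β δ *ᵥ nodeIndicator i := fun ⟨σ, j⟩ => by
    rw [Pi.zero_apply, hMv]
    split_ifs with hji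
    · linarith [hle σ]
    · exact div_nonneg (mul_nonneg (hQoff σ i j (Ne.symm hji)) (hpiv₀ σ i)) (hpiv₀ σ j)
  have hleave : ∀ σ, ∃ c, 0 < Q σ i c ∧ c ≠ i := fun σ =>
    (hQirr σ i (exists_ne i).choose).exists_ne_of_ne (exists_ne i).choose_spec.symm
  choose c hQc hci using hleave
  have hreach : ∀ p, ∃ q, Relation.ReflTransGen (fun a b => 0 < epidemicMatrix Q piv N β δ a b)
      p q ∧ 0 < (epidemicMatrix Q piv N β δ *ᵥ nodeIndicator i) q := fun ⟨σ, j⟩ =>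
    ⟨(σ, c σ), reflTransGen_epidemicMatrix hpivpos hN₀ hβ₀ (hQirr σ) j (c σ), by
      rw [hMv, if_neg (hci σ)]
      exact div_pos (mul_pos (hQc σ) (hpivpos σ i)) (hpivpos σ (c σ))⟩
  obtain ⟨z, hz, hre⟩ := (isMetzler_epidemicMatrix hQoff hpiv₀ hN₀ hβ₀).exists_pos_re_mem_spectrum
    (nodeIndicator_nonneg i) hMv_nonneg hreach
  exact (hre.trans_le (re_le_specAbscissa hz)).not_ge hμ

/-- If `μ(B F* − D − L*) ≤ 0`, then for each node `i` there exists a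
layer `α` such that `δ^α_i > β^α_i − ν^α_i`, where `ν^α_i = ∑_{j ≠ i} q^α_{ij}`. -/
theorem specAbscissa_nonpos_necessary_condition_per_node
    {n m : ℕ} (hn : 2 ≤ n) (hm : 1 ≤ m)
    (Q : Fin m → Matrix (Fin n) (Fin n) ℝ)
    (hQoff : ∀ (α : Fin m) (i j : Fin n), i ≠ j → 0 ≤ Q α i j)
    (hQdiag : ∀ (α : Fin m) (i : Fin n), Q α i i = -∑ j ∈ Finset.univ \ {i}, Q α i j)
    (hQirr : ∀ (α : Fin m) (i j : Fin n),
      Relation.ReflTransGen (fun a b => 0 < Q α a b) i j)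
    (piv : Fin m → Fin n → ℝ) (hpivpos : ∀ α i, 0 < piv α i)
    (hpiveig : ∀ (α : Fin m) (i : Fin n), ∑ j, Q α j i * piv α j = 0)
    (hpivsum : ∀ α, ∑ i, piv α i = 1)
    (N : Fin m → ℝ) (hN : ∀ α, 0 < N α)
    (β δ : Fin m → Fin n → ℝ)
    (hβ : ∀ α i, 0 < β α i) (hδ : ∀ α i, 0 ≤ δ α i)
    (hδpos : ∀ α, ∃ k, 0 < δ α k)
    (hμ : specAbscissa (pairDiag β * Fstar N piv - pairDiag δ - Lstar Q piv) ≤ 0) :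
    ∀ i : Fin n, ∃ α : Fin m,
      β α i - (∑ j ∈ Finset.univ \ {i}, Q α i j) < δ α i :=
  specAbscissa_nonpos_necessary_condition_per_node_general hn hm Q hQoff hQirr piv hpivpos N hN β δ
    hβ hμ
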